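/- arXiv:1411.3784 — 2 statements merged into one kernel-verified Lean document; each statement's English description precedes it below -/
import Mathlib

section
/- Universal approximation is preserved under pushing through all conditionals: let M be a set of probability distributions on a finite type Y whose closure (with respect to pointwise convergence, equivalently KL-approximation against positive targets) contains Δ(S) for a subset S ⊆ Y, and let r be a strictly positive probability distribution on Y. Then the closure of the set r ∗ M := {r ∗ s : s ∈ M, ∑_y r(y)s(y) ≠ 0} also contains Δ(S). -/
/-- `Δ(S)`: probability distributions on `Y` supported inside `S`. -/
def DeltaS {Y : Type*} [Fintype Y] (S : Set Y) : Set (Y → ℝ) :=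
  {p | (∀ y, 0 ≤ p y) ∧ (∑ y, p y = 1) ∧ (∀ y ∉ S, p y = 0)}

/-- The ℓ¹-closure of a set of functions on a finite type. -/
def l1Closure {Y : Type*} [Fintype Y] (M : Set (Y → ℝ)) : Set (Y → ℝ) :=
  {p | ∀ ε > 0, ∃ m ∈ M, ∑ y, |p y - m y| < ε}

/-- The set of renormalized Hadamard products `r ∗ s` for `s ∈ M`. -/
def hadamardSet {Y : Type*} [Fintype Y] (r : Y → ℝ) (M : Set (Y → ℝ)) :
    Set (Y → ℝ) :=
  {t | ∃ s ∈ M, (∑ y, r y * s y) ≠ 0 ∧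
    t = fun y => r y * s y / ∑ y', r y' * s y'}

/-- Universal approximation is preserved under Hadamard multiplication by a
strictly positive distribution. -/
theorem closure_hadamard_contains_deltaS {Y : Type*} [Fintype Y] (S : Set Y)
    (M : Set (Y → ℝ)) (r : Y → ℝ)
    (hr : ∀ y, 0 < r y) (hr1 : ∑ y, r y = 1)
    (hM : DeltaS S ⊆ l1Closure M) :
    DeltaS S ⊆ l1Closure (hadamardSet r M) := by
  intro p hp
  obtain ⟨hp0, hp1, hpS⟩ := hp
  intro ε hε
  -- normalization constant for the inverse Hadamard product
  have hZpos : 0 < ∑ y, p y / r y := by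
    have h1 : ∃ y, p y ≠ 0 := by
      by_contra h
      push_neg at h
      simp [h] at hp1
    obtain ⟨y0, hy0⟩ := h1
    exact Finset.sum_pos' (fun y _ => div_nonneg (hp0 y) (hr y).le)
      ⟨y0, Finset.mem_univ y0, div_pos ((hp0 y0).lt_of_ne (Ne.symm hy0)) (hr y0)⟩
  set Z : ℝ := ∑ y, p y / r y with hZdef
  set q : Y → ℝ := fun y => p y / (r y * Z) with hqdef
  have hq0 : ∀ y, 0 ≤ q y := fun y => div_nonneg (hp0 y) (mul_pos (hr y) hZpos).le
  have hq1 : ∑ y, q y = 1 := by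
    simp only [hqdef]
    simp_rw [← div_div, ← Finset.sum_div]
    exact div_self hZpos.ne'
  have hqS : ∀ y ∉ S, q y = 0 := fun y hy => by simp [hqdef, hpS y hy]
  have hq : q ∈ DeltaS S := ⟨hq0, hq1, hqS⟩
  set c₀ : ℝ := ∑ y, r y * q y with hc0def
  have hrq : ∀ y, r y * q y = p y / Z := by
    intro y
    simp only [hqdef]
    field_simp [(hr y).ne', hZpos.ne']
  have hc0 : c₀ = 1 / Z := by
    simp only [hc0def]
    simp_rw [hrq, ← Finset.sum_div, hp1]
  have hc0pos : 0 < c₀ := hc0 ▸ div_pos one_pos hZpos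
  have hpc : ∀ y, p y = r y * q y / c₀ := by
    intro y
    rw [hrq, hc0]
    field_simp
  -- choose the approximation accuracy
  set ε' : ℝ := min ε 1 with hε'def
  have hε'pos : 0 < ε' := lt_min hε one_pos
  have hε'le : ε' ≤ ε := min_le_left _ _
  have hε'1 : ε' ≤ 1 := min_le_right _ _
  set δ : ℝ := c₀ * ε' / 8 with hδdef
  have hδpos : 0 < δ := by positivity
  obtain ⟨m, hmM, hDlt⟩ := hM hq δ hδpos
  set D : ℝ := ∑ y, |q y - m y| with hDdef
  have hD0 : 0 ≤ D := Finset.sum_nonneg fun y _ => abs_nonneg _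
  set c : ℝ := ∑ y, r y * m y with hcdef
  have hrle : ∀ y, r y ≤ 1 := fun y =>
    hr1 ▸ Finset.single_le_sum (fun i _ => (hr i).le) (Finset.mem_univ y)
  have hcd : |c - c₀| ≤ D := by
    have hdiff : c - c₀ = ∑ y, r y * (m y - q y) := by
      simp only [hcdef, hc0def, ← Finset.sum_sub_distrib, mul_sub]
    rw [hdiff]
    calc |∑ y, r y * (m y - q y)| ≤ ∑ y, |r y * (m y - q y)| :=
          Finset.abs_sum_le_sum_abs _ _
      _ ≤ ∑ y, |q y - m y| := Finset.sum_le_sum fun y _ => by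
          rw [abs_mul, abs_of_pos (hr y), abs_sub_comm]
          exact mul_le_of_le_one_left (abs_nonneg _) (hrle y)
  have hclb : c₀ - D ≤ c := by
    have := neg_abs_le (c - c₀)
    linarith
  have hcub : c ≤ c₀ + D := by
    have := le_abs_self (c - c₀)
    linarith
  have hcpos : 0 < c := by nlinarith
  have hrm : ∑ y, r y * |m y| ≤ c₀ + D := by
    have : ∀ y, r y * |m y| ≤ r y * q y + |q y - m y| := by
      intro y
      have h1 : |m y| ≤ q y + |q y - m y| := by
        have := abs_sub_abs_le_abs_sub (m y) (q y)
        rw [abs_of_nonneg (hq0 y)] at this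
        rw [abs_sub_comm] at this
        linarith
      calc r y * |m y| ≤ r y * (q y + |q y - m y|) :=
            mul_le_mul_of_nonneg_left h1 (hr y).le
        _ = r y * q y + r y * |q y - m y| := by ring
        _ ≤ r y * q y + |q y - m y| := by
            have := mul_le_of_le_one_left (abs_nonneg (q y - m y)) (hrle y)
            linarith
    calc ∑ y, r y * |m y| ≤ ∑ y, (r y * q y + |q y - m y|) :=
          Finset.sum_le_sum fun y _ => this y
      _ = c₀ + D := by rw [Finset.sum_add_distrib]
  refine ⟨fun y => r y * m y / c, ⟨m, hmM, hcpos.ne', rfl⟩, ?_⟩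
  have key : ∀ y, |p y - r y * m y / c| ≤
      r y * |q y - m y| / c₀ + r y * |m y| * |c - c₀| / (c₀ * c) := by
    intro y
    rw [hpc y]
    have hid : r y * q y / c₀ - r y * m y / c =
        r y * (q y - m y) / c₀ + r y * m y * (c - c₀) / (c₀ * c) := by
      field_simp
      ring
    rw [hid]
    calc |r y * (q y - m y) / c₀ + r y * m y * (c - c₀) / (c₀ * c)|
        ≤ |r y * (q y - m y) / c₀| + |r y * m y * (c - c₀) / (c₀ * c)| :=
          abs_add_le _ _
      _ = r y * |q y - m y| / c₀ + r y * |m y| * |c - c₀| / (c₀ * c) := by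
          rw [abs_div, abs_div, abs_mul, abs_mul, abs_mul,
            abs_of_pos (hr y), abs_of_pos hc0pos,
            abs_of_pos (mul_pos hc0pos hcpos)]
  have hsum : ∑ y, |p y - r y * m y / c| ≤
      D / c₀ + (c₀ + D) * D / (c₀ * c) := by
    calc ∑ y, |p y - r y * m y / c|
        ≤ ∑ y, (r y * |q y - m y| / c₀ + r y * |m y| * |c - c₀| / (c₀ * c)) :=
          Finset.sum_le_sum fun y _ => key y
      _ = (∑ y, r y * |q y - m y|) / c₀ +
          (∑ y, r y * |m y|) * |c - c₀| / (c₀ * c) := by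
          rw [Finset.sum_add_distrib, ← Finset.sum_div, ← Finset.sum_div,
            ← Finset.sum_mul]
      _ ≤ D / c₀ + (c₀ + D) * D / (c₀ * c) := by
          have h1 : (∑ y, r y * |q y - m y|) ≤ D := by
            refine Finset.sum_le_sum fun y _ => ?_
            exact mul_le_of_le_one_left (abs_nonneg _) (hrle y)
          have h2 : (∑ y, r y * |m y|) * |c - c₀| ≤ (c₀ + D) * D := by
            refine mul_le_mul hrm hcd (abs_nonneg _) ?_
            linarith
          gcongr
  have hfinal : D / c₀ + (c₀ + D) * D / (c₀ * c) < ε := by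
    rw [div_add_div _ _ hc0pos.ne' (mul_pos hc0pos hcpos).ne',
      div_lt_iff₀ (mul_pos hc0pos (mul_pos hc0pos hcpos))]
    have hDδ : D < c₀ * ε' / 8 := hDlt
    have hmono := mul_le_mul_of_nonneg_left hε'1 hc0pos.le
    have h1 : D ≤ c₀ / 8 := by linarith
    have h2 : 7 * c₀ / 8 ≤ c := by linarith
    have h3 : c ≤ 9 * c₀ / 8 := by linarith
    have hL1 : D * (c₀ * c) ≤ (9/8) * c₀^2 * D := by
      have := mul_le_mul_of_nonneg_left h3 (mul_nonneg hD0 hc0pos.le)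
      linarith
    have hL2 : c₀ * ((c₀ + D) * D) ≤ (9/8) * c₀^2 * D := by
      have h4 : c₀ + D ≤ 9 * c₀ / 8 := by linarith
      have := mul_le_mul_of_nonneg_right h4 (mul_nonneg hc0pos.le hD0)
      linarith
    have hE : (9/4) * c₀^2 * D < (9/4) * c₀^2 * (c₀ * ε' / 8) := by
      apply mul_lt_mul_of_pos_left hDlt
      positivity
    have hF1 : ε' * (c₀^2 * (7 * c₀ / 8)) ≤ ε' * (c₀^2 * c) := by
      apply mul_le_mul_of_nonneg_left _ hε'pos.le
      have := mul_le_mul_of_nonneg_left h2 (sq_nonneg c₀)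
      linarith
    have hF2 : ε' * (c₀^2 * c) ≤ ε * (c₀^2 * c) := by
      apply mul_le_mul_of_nonneg_right hε'le
      positivity
    have hpos : 0 ≤ ε * (c₀ ^ 2 * c) :=
      mul_nonneg hε.le (by positivity)
    linarith [hL1, hL2, hE, hF1, hF2, hpos]
  linarith [hsum, hfinal]
end

section
/- Conditional universal approximation follows from joint universal approximation: let M be a set of probability distributions on a finite product type I × O whose closure contains all distributions on I × O. Then for every strictly positive probability distribution q on I × O and every ε > 0, there exists p ∈ M such that p(i) := ∑_o p(i,o) > 0 for all i and ∑_{i,o} |q(o|i) − p(o|i)| < ε, where p(o|i) := p(i,o)/p(i) and q(o|i) := q(i,o)/∑_{o'} q(i,o'). -/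
lemma aux_row {O : Type*} [Fintype O] [Nonempty O] (qv pv : O → ℝ)
    (hqv : ∀ o, 0 < qv o) (hP : 0 < ∑ o', pv o') :
    ∑ o, |qv o / (∑ o', qv o') - pv o / (∑ o', pv o')| ≤
      2 * (∑ o, |qv o - pv o|) / (∑ o', pv o') := by
  set Q := ∑ o', qv o' with hQdef
  set P := ∑ o', pv o' with hPdef
  have hQ : 0 < Q := Finset.sum_pos (fun o _ => hqv o) Finset.univ_nonempty
  have hQP : 0 < Q * P := mul_pos hQ hP
  set s := ∑ o, |qv o - pv o| with hsdef
  have hPQ : |P - Q| ≤ s := by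
    have : P - Q = ∑ o, (pv o - qv o) := by rw [hQdef, hPdef, ← Finset.sum_sub_distrib]
    rw [this]
    calc |∑ o, (pv o - qv o)| ≤ ∑ o, |pv o - qv o| := Finset.abs_sum_le_sum_abs _ _
      _ = s := by simp [hsdef, abs_sub_comm]
  have key : ∀ o, |qv o / Q - pv o / P| ≤ qv o * |P - Q| / (Q * P) + |qv o - pv o| / P := by
    intro o
    have h1 : qv o / Q - pv o / P = (qv o * (P - Q) + Q * (qv o - pv o)) / (Q * P) := by
      field_simp; ring
    rw [h1, abs_div, abs_of_pos hQP]
    have h2 : |qv o * (P - Q) + Q * (qv o - pv o)| ≤ qv o * |P - Q| + Q * |qv o - pv o| := by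
      calc |qv o * (P - Q) + Q * (qv o - pv o)| ≤ |qv o * (P - Q)| + |Q * (qv o - pv o)| :=
            abs_add_le _ _
        _ = qv o * |P - Q| + Q * |qv o - pv o| := by
            rw [abs_mul, abs_mul, abs_of_pos (hqv o), abs_of_pos hQ]
    calc |qv o * (P - Q) + Q * (qv o - pv o)| / (Q * P)
        ≤ (qv o * |P - Q| + Q * |qv o - pv o|) / (Q * P) := by gcongr
      _ = qv o * |P - Q| / (Q * P) + |qv o - pv o| / P := by
          field_simp
  calc ∑ o, |qv o / Q - pv o / P|
      ≤ ∑ o, (qv o * |P - Q| / (Q * P) + |qv o - pv o| / P) :=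
        Finset.sum_le_sum fun o _ => key o
    _ = (∑ o, qv o) * |P - Q| / (Q * P) + s / P := by
        rw [Finset.sum_add_distrib, ← Finset.sum_div, ← Finset.sum_div, ← Finset.sum_mul]
    _ = |P - Q| / P + s / P := by
        rw [← hQdef]; field_simp
    _ ≤ s / P + s / P := by gcongr
    _ = 2 * s / P := by ring

/-- Conditional universal approximation follows from joint universal
approximation. -/
theorem conditional_universal_approximation
    {I O : Type*} [Fintype I] [Fintype O] [Nonempty I] [Nonempty O]
    (M : Set (I × O → ℝ))
    (hM : ∀ t : I × O → ℝ, (∀ z, 0 ≤ t z) → (∑ z, t z = 1) → t ∈ l1Closure M)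
    (q : I × O → ℝ) (hq : ∀ z, 0 < q z) (hq1 : ∑ z, q z = 1)
    (ε : ℝ) (hε : 0 < ε) :
    ∃ p ∈ M, (∀ i : I, 0 < ∑ o : O, p (i, o)) ∧
      ∑ i : I, ∑ o : O,
        |q (i, o) / (∑ o' : O, q (i, o')) -
          p (i, o) / (∑ o' : O, p (i, o'))| < ε := by
  -- c : minimal marginal of q
  set c := Finset.univ.inf' Finset.univ_nonempty (fun i : I => ∑ o : O, q (i, o)) with hcdef
  have hc : 0 < c := by
    rw [hcdef, Finset.lt_inf'_iff]
    exact fun i _ => Finset.sum_pos (fun o _ => hq _) Finset.univ_nonempty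
  have hcle : ∀ i : I, c ≤ ∑ o : O, q (i, o) := fun i =>
    Finset.inf'_le _ (Finset.mem_univ i)
  set δ := min (c / 2) (ε * c / 8) with hδdef
  have hδ : 0 < δ := lt_min (by linarith) (by positivity)
  obtain ⟨p, hpM, hpδ⟩ := hM q (fun z => (hq z).le) hq1 δ hδ
  have hsum : ∑ i : I, ∑ o : O, |q (i, o) - p (i, o)| < δ := by
    rw [Fintype.sum_prod_type] at hpδ; exact hpδ
  set s := fun i : I => ∑ o : O, |q (i, o) - p (i, o)| with hsdef
  have hs_nonneg : ∀ i, 0 ≤ s i := fun i =>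
    Finset.sum_nonneg fun o _ => abs_nonneg _
  have hs_le : ∀ i, s i < δ := by
    intro i
    calc s i ≤ ∑ j : I, s j :=
          Finset.single_le_sum (fun j _ => hs_nonneg j) (Finset.mem_univ i)
      _ < δ := hsum
  -- marginals of p are positive
  have hPi : ∀ i : I, c / 2 < ∑ o : O, p (i, o) := by
    intro i
    have h1 : |(∑ o : O, p (i, o)) - ∑ o : O, q (i, o)| ≤ s i := by
      rw [← Finset.sum_sub_distrib]
      calc |∑ o : O, (p (i, o) - q (i, o))| ≤ ∑ o : O, |p (i, o) - q (i, o)| :=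
            Finset.abs_sum_le_sum_abs _ _
        _ = s i := by simp [hsdef, abs_sub_comm]
    have h2 := abs_le.mp h1
    have h3 := hcle i
    have h4 : δ ≤ c / 2 := min_le_left _ _
    have h5 := hs_le i
    linarith [h2.1]
  have hPipos : ∀ i : I, 0 < ∑ o : O, p (i, o) := fun i => lt_trans (by linarith) (hPi i)
  refine ⟨p, hpM, hPipos, ?_⟩
  have row : ∀ i : I, ∑ o : O,
      |q (i, o) / (∑ o' : O, q (i, o')) - p (i, o) / (∑ o' : O, p (i, o'))| ≤
      4 * s i / c := by
    intro i
    calc ∑ o : O, |q (i, o) / (∑ o' : O, q (i, o')) - p (i, o) / (∑ o' : O, p (i, o'))|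
        ≤ 2 * s i / (∑ o' : O, p (i, o')) :=
          aux_row (fun o => q (i, o)) (fun o => p (i, o)) (fun o => hq _) (hPipos i)
      _ ≤ 2 * s i / (c / 2) := by
          apply div_le_div_of_nonneg_left (by positivity) (by linarith) (hPi i).le
      _ = 4 * s i / c := by field_simp; ring
  calc ∑ i : I, ∑ o : O,
        |q (i, o) / (∑ o' : O, q (i, o')) - p (i, o) / (∑ o' : O, p (i, o'))|
      ≤ ∑ i : I, 4 * s i / c := Finset.sum_le_sum fun i _ => row i
    _ = 4 / c * ∑ i : I, s i := by rw [Finset.mul_sum]; congr 1; ext i; field_simp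
    _ < 4 / c * δ := by
        apply mul_lt_mul_of_pos_left hsum (by positivity)
    _ ≤ 4 / c * (ε * c / 8) := by
        apply mul_le_mul_of_nonneg_left (min_le_right _ _) (by positivity)
    _ = ε / 2 := by field_simp; ring
    _ < ε := by linarith
end
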